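/- arXiv:2001.10998 — 5 statements merged into one kernel-verified Lean document; each statement's English description precedes it below -/
import Mathlib

section
/- The functions H and J of the 1:(−2) resonance system are in involution: the canonical Poisson bracket {H, J} vanishes at every point of ℝ⁴. -/
noncomputable section

/-- Hamiltonian of the 1:(-2) resonance system on ℝ⁴ with coordinates (q₁, q₂, p₁, p₂). -/
def Hres (q1 q2 p1 p2 : ℝ) : ℝ :=
  2 * q1 * p1 * q2 + (q1 ^ 2 - p1 ^ 2) * p2
    + ((1 / 2) * (q1 ^ 2 + p1 ^ 2) + (q2 ^ 2 + p2 ^ 2)) ^ 2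

/-- Momentum of the 1:(-2) resonance system. -/
def Jres (q1 q2 p1 p2 : ℝ) : ℝ :=
  (1 / 2) * (q1 ^ 2 + p1 ^ 2) - (q2 ^ 2 + p2 ^ 2)

/-- Partial derivatives with respect to the four coordinates. -/
def pdq1 (F : ℝ → ℝ → ℝ → ℝ → ℝ) (q1 q2 p1 p2 : ℝ) : ℝ :=
  deriv (fun x => F x q2 p1 p2) q1

def pdq2 (F : ℝ → ℝ → ℝ → ℝ → ℝ) (q1 q2 p1 p2 : ℝ) : ℝ :=
  deriv (fun x => F q1 x p1 p2) q2

def pdp1 (F : ℝ → ℝ → ℝ → ℝ → ℝ) (q1 q2 p1 p2 : ℝ) : ℝ :=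
  deriv (fun x => F q1 q2 x p2) p1

def pdp2 (F : ℝ → ℝ → ℝ → ℝ → ℝ) (q1 q2 p1 p2 : ℝ) : ℝ :=
  deriv (fun x => F q1 q2 p1 x) p2

/-- The canonical Poisson bracket of two functions on ℝ⁴. -/
def poissonBracket (F G : ℝ → ℝ → ℝ → ℝ → ℝ) (q1 q2 p1 p2 : ℝ) : ℝ :=
  pdq1 F q1 q2 p1 p2 * pdp1 G q1 q2 p1 p2
    + pdq2 F q1 q2 p1 p2 * pdp2 G q1 q2 p1 p2
    - pdp1 F q1 q2 p1 p2 * pdq1 G q1 q2 p1 p2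
    - pdp2 F q1 q2 p1 p2 * pdq2 G q1 q2 p1 p2
/-!
The flow of `J` rotates `z₁ = q₁ + i p₁` as `e^{-it}` and `z₂ = q₂ + i p₂` as `e^{2it}`.
Both `R` and the cubic part `Im (z₁² z₂)` of `H` are invariant under it, so `{H, J} = 0`.
-/

def Rres (q1 q2 p1 p2 : ℝ) : ℝ :=
  (1 / 2) * (q1 ^ 2 + p1 ^ 2) + (q2 ^ 2 + p2 ^ 2)

section PartialDerivatives

variable (q1 q2 p1 p2 : ℝ)

theorem poissonBracket_Jres (F : ℝ → ℝ → ℝ → ℝ → ℝ) :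
    poissonBracket F Jres q1 q2 p1 p2 =
      p1 * pdq1 F q1 q2 p1 p2 - q1 * pdp1 F q1 q2 p1 p2
        - 2 * (p2 * pdq2 F q1 q2 p1 p2 - q2 * pdp2 F q1 q2 p1 p2) := by
  simp (disch := fun_prop) only [poissonBracket, pdq1, pdq2, pdp1, pdp2, Jres, deriv_fun_add,
    deriv_fun_sub, deriv_const_mul_field, deriv_fun_pow, deriv_id'', deriv_const]
  ring

theorem pdq1_Hres :
    pdq1 Hres q1 q2 p1 p2 = 2 * p1 * q2 + 2 * q1 * p2 + 2 * Rres q1 q2 p1 p2 * q1 := by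
  simp (disch := fun_prop) only [pdq1, Hres, Rres, deriv_fun_add, deriv_fun_sub, deriv_fun_mul,
    deriv_fun_pow, deriv_const_mul_id, deriv_id'', deriv_const]
  ring

theorem pdq2_Hres :
    pdq2 Hres q1 q2 p1 p2 = 2 * q1 * p1 + 4 * Rres q1 q2 p1 p2 * q2 := by
  simp (disch := fun_prop) only [pdq2, Hres, Rres, deriv_fun_add, deriv_fun_sub, deriv_fun_mul,
    deriv_fun_pow, deriv_const_mul_id, deriv_id'', deriv_const]
  ring

theorem pdp1_Hres :
    pdp1 Hres q1 q2 p1 p2 = 2 * q1 * q2 - 2 * p1 * p2 + 2 * Rres q1 q2 p1 p2 * p1 := by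
  simp (disch := fun_prop) only [pdp1, Hres, Rres, deriv_fun_add, deriv_fun_sub, deriv_fun_mul,
    deriv_fun_pow, deriv_const_mul_id, deriv_id'', deriv_const]
  ring

theorem pdp2_Hres :
    pdp2 Hres q1 q2 p1 p2 = q1 ^ 2 - p1 ^ 2 + 4 * Rres q1 q2 p1 p2 * p2 := by
  simp (disch := fun_prop) only [pdp2, Hres, Rres, deriv_fun_add, deriv_fun_mul,
    deriv_fun_pow, deriv_const_mul_id, deriv_id'', deriv_const]
  ring

end PartialDerivatives

/-- The functions H and J of the 1:(-2) resonance system are in involution. -/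
theorem resonance_H_J_in_involution (q1 q2 p1 p2 : ℝ) :
    poissonBracket Hres Jres q1 q2 p1 p2 = 0 := by
  rw [poissonBracket_Jres, pdq1_Hres, pdq2_Hres, pdp1_Hres, pdp2_Hres]
  ring
end
end

section
/- For every 0 < ε < 2, the energy level of the spherical pendulum below the critical value, namely the set {(q, p) ∈ ℝ³ × ℝ³ : ‖q‖ = 1, ⟨q, p⟩ = 0, (1/2)‖p‖² + q₃ = 1 − ε}, is homeomorphic to the unit 3-sphere S³ = {x ∈ ℝ⁴ : ‖x‖ = 1}. -/
/-!
Away from the fibre over the north pole `e₃`, chart `T*S²` by `(q, p) ↦ (u, w)` with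
`u = (q₁, q₂) / √(1 - q₃)` and `w = (Rp)₁,₂ / √2`, where `R` is the reflection exchanging `q`
and `e₃` (Lean indexes coordinates from `0`, so `q₃` is `x.1 2`). The map `q ↦ u`
is a rescaled Lambert equal-area projection, `‖u‖² = 1 + q₃`, and `R` carries `T_q S²`
isometrically onto the horizontal plane, `‖w‖² = ‖p‖² / 2`. Hence the chart satisfies
`‖(u, w)‖² = 1 + H(q, p)`. Below the critical value `h < 1` the energy level avoids the north
pole, so the chart maps it homeomorphically onto the round sphere of radius `√(1 + h)` in `ℝ⁴`.
-/

noncomputable section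

open Metric Real
open scoped RealInnerProductSpace

def sphereHomeomorphUnitSphere {E : Type*} [NormedAddCommGroup E] [NormedSpace ℝ E] {r : ℝ}
    (hr : 0 < r) : sphere (0 : E) r ≃ₜ sphere (0 : E) 1 where
  toFun x := ⟨r⁻¹ • x.1, by simp [norm_smul, abs_of_pos hr, hr.ne']⟩
  invFun y := ⟨r • y.1, by simp [norm_smul, abs_of_pos hr]⟩
  left_inv x := by ext1; simp [smul_smul, hr.ne']
  right_inv y := by ext1; simp [smul_smul, hr.ne']
  continuous_toFun := by fun_prop
  continuous_invFun := by fun_prop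

namespace EuclideanSpace

lemma norm_sq_eq_fin_three (v : EuclideanSpace ℝ (Fin 3)) :
    ‖v‖ ^ 2 = v 0 ^ 2 + v 1 ^ 2 + v 2 ^ 2 := by
  simp [EuclideanSpace.norm_sq_eq, Fin.sum_univ_three]

lemma norm_sq_eq_fin_four (v : EuclideanSpace ℝ (Fin 4)) :
    ‖v‖ ^ 2 = v 0 ^ 2 + v 1 ^ 2 + v 2 ^ 2 + v 3 ^ 2 := by
  simp [EuclideanSpace.norm_sq_eq, Fin.sum_univ_four]

lemma inner_eq_fin_three (v w : EuclideanSpace ℝ (Fin 3)) :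
    ⟪v, w⟫ = v 0 * w 0 + v 1 * w 1 + v 2 * w 2 := by
  simp [PiLp.inner_apply, Fin.sum_univ_three, mul_comm]

end EuclideanSpace

namespace SphericalPendulum

local notation "ℝ³" => EuclideanSpace ℝ (Fin 3)
local notation "ℝ⁴" => EuclideanSpace ℝ (Fin 4)

def hamiltonian (x : ℝ³ × ℝ³) : ℝ := 1 / 2 * ‖x.2‖ ^ 2 + x.1 2

def energyLevel (h : ℝ) : Set (ℝ³ × ℝ³) :=
  {x | ‖x.1‖ = 1 ∧ ⟪x.1, x.2⟫ = 0 ∧ hamiltonian x = h}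

def cotangentLambertSource : Set (ℝ³ × ℝ³) := {x | ‖x.1‖ = 1 ∧ ⟪x.1, x.2⟫ = 0 ∧ x.1 2 < 1}

def cotangentLambertTarget : Set ℝ⁴ := {a | a 0 ^ 2 + a 1 ^ 2 < 2}

def cotangentLambert (x : ℝ³ × ℝ³) : ℝ⁴ :=
  !₂[x.1 0 / √(1 - x.1 2), x.1 1 / √(1 - x.1 2),
    (x.2 0 + x.2 2 * x.1 0 / (1 - x.1 2)) / √2, (x.2 1 + x.2 2 * x.1 1 / (1 - x.1 2)) / √2]

def cotangentLambertInv (a : ℝ⁴) : ℝ³ × ℝ³ :=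
  let s := 2 - (a 0 ^ 2 + a 1 ^ 2)
  let d := a 0 * a 2 + a 1 * a 3
  (!₂[a 0 * √s, a 1 * √s, 1 - s], √2 • !₂[a 2 - d * a 0, a 3 - d * a 1, d * √s])

lemma mem_cotangentLambertSource_iff {x : ℝ³ × ℝ³} :
    x ∈ cotangentLambertSource ↔ x.1 0 ^ 2 + x.1 1 ^ 2 + x.1 2 ^ 2 = 1 ∧
      x.1 0 * x.2 0 + x.1 1 * x.2 1 + x.1 2 * x.2 2 = 0 ∧ x.1 2 < 1 := by
  rw [← EuclideanSpace.norm_sq_eq_fin_three, ← EuclideanSpace.inner_eq_fin_three,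
    pow_eq_one_iff_of_nonneg (norm_nonneg _) two_ne_zero]
  rfl

lemma cotangentLambert_zero_sq_add_one_sq {x : ℝ³ × ℝ³} (hx : x ∈ cotangentLambertSource) :
    cotangentLambert x 0 ^ 2 + cotangentLambert x 1 ^ 2 = 1 + x.1 2 := by
  obtain ⟨hq, -, hq2⟩ := mem_cotangentLambertSource_iff.1 hx
  have hs : 0 < 1 - x.1 2 := by linarith
  simp only [cotangentLambert, Matrix.cons_val_zero, Matrix.cons_val_one, div_pow, sq_sqrt hs.le]
  field_simp
  linear_combination hq

lemma cotangentLambert_two_sq_add_three_sq {x : ℝ³ × ℝ³} (hx : x ∈ cotangentLambertSource) :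
    cotangentLambert x 2 ^ 2 + cotangentLambert x 3 ^ 2 = ‖x.2‖ ^ 2 / 2 := by
  obtain ⟨hq, hqp, hq2⟩ := mem_cotangentLambertSource_iff.1 hx
  have hs : 0 < 1 - x.1 2 := by linarith
  simp only [cotangentLambert, Matrix.cons_val, div_pow, sq_sqrt zero_le_two,
    EuclideanSpace.norm_sq_eq_fin_three]
  field_simp
  linear_combination (2 * x.2 2 * (1 - x.1 2)) * hqp + x.2 2 ^ 2 * hq

lemma norm_cotangentLambert_sq {x : ℝ³ × ℝ³} (hx : x ∈ cotangentLambertSource) :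
    ‖cotangentLambert x‖ ^ 2 = 1 + hamiltonian x := by
  rw [EuclideanSpace.norm_sq_eq_fin_four, hamiltonian]
  linear_combination cotangentLambert_zero_sq_add_one_sq hx +
    cotangentLambert_two_sq_add_three_sq hx

lemma cotangentLambertInv_mem_cotangentLambertSource {a : ℝ⁴} (ha : a ∈ cotangentLambertTarget) :
    cotangentLambertInv a ∈ cotangentLambertSource := by
  have hs : 0 < 2 - (a 0 ^ 2 + a 1 ^ 2) := sub_pos.2 ha
  rw [mem_cotangentLambertSource_iff]
  simp only [cotangentLambertInv, Matrix.cons_val_zero, Matrix.cons_val_one, Matrix.cons_val,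
    PiLp.smul_apply, smul_eq_mul, mul_pow, sq_sqrt hs.le]
  exact ⟨by ring, by ring, by linarith⟩

lemma cotangentLambertInv_cotangentLambert {x : ℝ³ × ℝ³} (hx : x ∈ cotangentLambertSource) :
    cotangentLambertInv (cotangentLambert x) = x := by
  obtain ⟨hq, hqp, hq2⟩ := mem_cotangentLambertSource_iff.1 hx
  have hs : 0 < 1 - x.1 2 := by linarith
  have hr : 2 - (cotangentLambert x 0 ^ 2 + cotangentLambert x 1 ^ 2) = 1 - x.1 2 := by
    rw [cotangentLambert_zero_sq_add_one_sq hx]; ring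
  have ht : √(1 - x.1 2) ^ 2 = 1 - x.1 2 := sq_sqrt hs.le
  have ht0 : √(1 - x.1 2) ≠ 0 := (sqrt_pos.2 hs).ne'
  simp only [cotangentLambertInv, hr]
  ext i <;> fin_cases i <;>
    simp only [cotangentLambert, Matrix.cons_val, Matrix.cons_val_zero, Matrix.cons_val_one,
      Fin.zero_eta, Fin.mk_one, Fin.reduceFinMk, sub_sub_cancel, PiLp.smul_apply, smul_eq_mul] <;>
    field_simp
  · linear_combination (-x.1 0 * (1 - x.1 2)) * hqp - x.1 0 * x.2 2 * hq + x.1 0 * x.2 2 * ht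
  · linear_combination (-x.1 1 * (1 - x.1 2)) * hqp - x.1 1 * x.2 2 * hq + x.1 1 * x.2 2 * ht
  · linear_combination (1 - x.1 2) * hqp + x.2 2 * hq

lemma cotangentLambert_cotangentLambertInv {a : ℝ⁴} (ha : a ∈ cotangentLambertTarget) :
    cotangentLambert (cotangentLambertInv a) = a := by
  set s := 2 - (a 0 ^ 2 + a 1 ^ 2) with hs_def
  have hs : 0 < s := sub_pos.2 ha
  have ht : √s ^ 2 = s := sq_sqrt hs.le
  have ht0 : √s ≠ 0 := (sqrt_pos.2 hs).ne'
  ext i; fin_cases i <;>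
    simp only [cotangentLambert, cotangentLambertInv, ← hs_def, Matrix.cons_val,
      Matrix.cons_val_zero, Matrix.cons_val_one, Fin.zero_eta, Fin.mk_one, Fin.reduceFinMk,
      sub_sub_cancel, PiLp.smul_apply, smul_eq_mul] <;>
    field_simp
  all_goals rw [ht]; ring

lemma continuousOn_cotangentLambert : ContinuousOn cotangentLambert cotangentLambertSource := by
  have hs : ∀ x ∈ cotangentLambertSource, 0 < 1 - x.1 2 := fun x hx => sub_pos.2 hx.2.2
  unfold cotangentLambert
  fun_prop (disch := intro x hx; first
    | exact (hs x hx).ne' | exact (sqrt_pos.2 (hs x hx)).ne' | positivity)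

lemma continuous_cotangentLambertInv : Continuous cotangentLambertInv := by
  unfold cotangentLambertInv
  fun_prop

def cotangentLambertChart : PartialHomeomorph (ℝ³ × ℝ³) ℝ⁴ where
  toFun := cotangentLambert
  invFun := cotangentLambertInv
  source := cotangentLambertSource
  target := cotangentLambertTarget
  map_source' x hx := by
    change _ < (2 : ℝ)
    rw [cotangentLambert_zero_sq_add_one_sq hx]
    linarith [hx.2.2]
  map_target' _ := cotangentLambertInv_mem_cotangentLambertSource
  left_inv' _ := cotangentLambertInv_cotangentLambert
  right_inv' _ := cotangentLambert_cotangentLambertInv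
  continuousOn_toFun := continuousOn_cotangentLambert
  continuousOn_invFun := continuous_cotangentLambertInv.continuousOn

lemma energyLevel_subset_cotangentLambertSource {h : ℝ} (h1 : h < 1) :
    energyLevel h ⊆ cotangentLambertSource := by
  rintro x ⟨hq, hqp, hH⟩
  refine ⟨hq, hqp, ?_⟩
  have : 0 ≤ ‖x.2‖ ^ 2 := by positivity
  rw [hamiltonian] at hH
  linarith

lemma image_energyLevel {h : ℝ} (hm1 : -1 ≤ h) (h1 : h < 1) :
    cotangentLambert '' energyLevel h = sphere 0 √(1 + h) := by
  have h0 : 0 ≤ 1 + h := by linarith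
  ext a
  constructor
  · rintro ⟨x, hx, rfl⟩
    rw [mem_sphere_zero_iff_norm, ← sq_eq_sq₀ (norm_nonneg _) (sqrt_nonneg _), sq_sqrt h0,
      norm_cotangentLambert_sq (energyLevel_subset_cotangentLambertSource h1 hx), hx.2.2]
  · intro ha
    have hna : ‖a‖ ^ 2 = 1 + h := by rw [mem_sphere_zero_iff_norm.1 ha, sq_sqrt h0]
    have hat : a ∈ cotangentLambertTarget := by
      change _ < (2 : ℝ)
      nlinarith [EuclideanSpace.norm_sq_eq_fin_four a, sq_nonneg (a 2), sq_nonneg (a 3)]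
    have hx := cotangentLambertInv_mem_cotangentLambertSource hat
    refine ⟨cotangentLambertInv a, ⟨hx.1, hx.2.1, ?_⟩, cotangentLambert_cotangentLambertInv hat⟩
    have hH := norm_cotangentLambert_sq hx
    rw [cotangentLambert_cotangentLambertInv hat, hna] at hH
    linarith

def energyLevelHomeomorphSphere {h : ℝ} (hm1 : -1 ≤ h) (h1 : h < 1) :
    energyLevel h ≃ₜ sphere (0 : ℝ⁴) √(1 + h) :=
  cotangentLambertChart.homeomorphOfImageSubsetSource
    (energyLevel_subset_cotangentLambertSource h1) (image_energyLevel hm1 h1)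

end SphericalPendulum

/-- For every 0 < ε < 2 the energy level
{(q, p) : ‖q‖ = 1, ⟨q, p⟩ = 0, (1/2)‖p‖² + q₃ = 1 − ε} of the spherical
pendulum below the critical value is homeomorphic to the unit 3-sphere. -/
theorem energy_level_below_homeomorphic_S3 (ε : ℝ) (hε0 : 0 < ε) (hε2 : ε < 2) :
    Nonempty
      (({x : EuclideanSpace ℝ (Fin 3) × EuclideanSpace ℝ (Fin 3) |
          ‖x.1‖ = 1 ∧ (inner ℝ x.1 x.2 : ℝ) = 0 ∧
            (1 / 2) * ‖x.2‖ ^ 2 + x.1 2 = 1 - ε} : Set _) ≃ₜ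
        (Metric.sphere (0 : EuclideanSpace ℝ (Fin 4)) 1)) :=
  ⟨(SphericalPendulum.energyLevelHomeomorphSphere (by linarith) (by linarith)).trans
    (sphereHomeomorphUnitSphere (sqrt_pos.2 (by linarith)))⟩
end
end

section
/- For every ε > 0, the energy level of the spherical pendulum above the critical value, namely the set {(q, p) ∈ ℝ³ × ℝ³ : ‖q‖ = 1, ⟨q, p⟩ = 0, (1/2)‖p‖² + q₃ = 1 + ε}, is homeomorphic to the unit cotangent bundle T*₁S² = {(q, p) ∈ ℝ³ × ℝ³ : ‖q‖ = 1, ⟨q, p⟩ = 0, ‖p‖ = 1}. -/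
noncomputable section

/-!
Above the critical value `1` the pendulum's speed `‖p‖ = √(2 (1 + ε - q₃))` is a continuous,
strictly positive function of the position `q ∈ S²`, since `q₃ ≤ 1`. Dividing the momentum by
this speed maps the energy level homeomorphically onto the unit cotangent bundle.
-/

open Metric

section SphereBundle

variable {X E : Type*} [NormedAddCommGroup E] [NormedSpace ℝ E]

def sphereBundle (B : Set X) (V : X → Submodule ℝ E) (r : X → ℝ) : Set (X × E) :=
  {z | z.1 ∈ B ∧ z.2 ∈ V z.1 ∧ ‖z.2‖ = r z.1}

lemma smul_mem_sphereBundle {B : Set X} {V : X → Submodule ℝ E} {r r' : X → ℝ}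
    {z : X × E} (hz : z ∈ sphereBundle B V r) {t : ℝ} (ht : 0 ≤ t) (htr : t * r z.1 = r' z.1) :
    (z.1, t • z.2) ∈ sphereBundle B V r' := by
  obtain ⟨hB, hV, hr⟩ := hz
  exact ⟨hB, (V z.1).smul_mem t hV, by simp [norm_smul, abs_of_nonneg ht, hr, htr]⟩

def Homeomorph.sphereBundleRescale [TopologicalSpace X] (B : Set X) (V : X → Submodule ℝ E)
    {r : X → ℝ} (hr : Continuous r) (hr_pos : ∀ x ∈ B, 0 < r x) :
    sphereBundle B V r ≃ₜ sphereBundle B V 1 where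
  toFun z := ⟨(z.1.1, (r z.1.1)⁻¹ • z.1.2), smul_mem_sphereBundle z.2
    (inv_nonneg.2 (hr_pos _ z.2.1).le) (inv_mul_cancel₀ (hr_pos _ z.2.1).ne')⟩
  invFun z := ⟨(z.1.1, r z.1.1 • z.1.2), smul_mem_sphereBundle z.2 (hr_pos _ z.2.1).le
    (by simp)⟩
  left_inv z := Subtype.ext <| Prod.ext rfl <| smul_inv_smul₀ (hr_pos _ z.2.1).ne' _
  right_inv z := Subtype.ext <| Prod.ext rfl <| inv_smul_smul₀ (hr_pos _ z.2.1).ne' _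
  continuous_toFun := by fun_prop (disch := exact fun z => (hr_pos _ z.2.1).ne')
  continuous_invFun := by fun_prop

end SphereBundle

lemma EuclideanSpace.apply_le_of_norm_eq_one {ι : Type*} [Fintype ι]
    {q : EuclideanSpace ℝ ι} (hq : ‖q‖ = 1) (i : ι) : q i ≤ 1 :=
  (le_abs_self _).trans (hq ▸ PiLp.norm_apply_le q i)

lemma energyLevel_eq_sphereBundle (ε : ℝ) (hε : 0 ≤ ε) :
    {x : EuclideanSpace ℝ (Fin 3) × EuclideanSpace ℝ (Fin 3) |
        ‖x.1‖ = 1 ∧ (inner ℝ x.1 x.2 : ℝ) = 0 ∧ (1 / 2) * ‖x.2‖ ^ 2 + x.1 2 = 1 + ε} =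
      sphereBundle (sphere 0 1) (fun q => (ℝ ∙ q)ᗮ) fun q => √(2 * (1 + ε - q 2)) := by
  ext ⟨q, p⟩
  simp only [sphereBundle, Set.mem_ofPred_eq, mem_sphere_zero_iff_norm,
    Submodule.mem_orthogonal_singleton_iff_inner_right]
  refine and_congr_right fun hq => and_congr_right fun _ => ?_
  have hq₃ := EuclideanSpace.apply_le_of_norm_eq_one hq 2
  rw [eq_comm (a := ‖p‖), Real.sqrt_eq_iff_eq_sq (by linarith) (norm_nonneg p)]
  constructor <;> intro h <;> linarith

lemma unitCotangent_eq_sphereBundle :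
    {x : EuclideanSpace ℝ (Fin 3) × EuclideanSpace ℝ (Fin 3) |
        ‖x.1‖ = 1 ∧ (inner ℝ x.1 x.2 : ℝ) = 0 ∧ ‖x.2‖ = 1} =
      sphereBundle (sphere 0 1) (fun q => (ℝ ∙ q)ᗮ) 1 := by
  ext ⟨q, p⟩
  simp [sphereBundle, Submodule.mem_orthogonal_singleton_iff_inner_right]

/-- For every ε > 0 the energy level
{(q, p) : ‖q‖ = 1, ⟨q, p⟩ = 0, (1/2)‖p‖² + q₃ = 1 + ε} of the spherical
pendulum above the critical value is homeomorphic to the unit cotangent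
bundle T*₁S² = {(q, p) : ‖q‖ = 1, ⟨q, p⟩ = 0, ‖p‖ = 1}. -/
theorem energy_level_above_homeomorphic_unit_cotangent (ε : ℝ) (hε : 0 < ε) :
    Nonempty
      (({x : EuclideanSpace ℝ (Fin 3) × EuclideanSpace ℝ (Fin 3) |
          ‖x.1‖ = 1 ∧ (inner ℝ x.1 x.2 : ℝ) = 0 ∧
            (1 / 2) * ‖x.2‖ ^ 2 + x.1 2 = 1 + ε} : Set _) ≃ₜ
        ({x : EuclideanSpace ℝ (Fin 3) × EuclideanSpace ℝ (Fin 3) |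
          ‖x.1‖ = 1 ∧ (inner ℝ x.1 x.2 : ℝ) = 0 ∧ ‖x.2‖ = 1} : Set _)) := by
  have hspeed_cont : Continuous fun q : EuclideanSpace ℝ (Fin 3) => √(2 * (1 + ε - q 2)) := by
    fun_prop
  have hspeed_pos : ∀ q ∈ sphere (0 : EuclideanSpace ℝ (Fin 3)) 1, 0 < √(2 * (1 + ε - q 2)) := by
    intro q hq
    have := EuclideanSpace.apply_le_of_norm_eq_one (mem_sphere_zero_iff_norm.1 hq) 2
    exact Real.sqrt_pos.2 (by linarith)
  exact ⟨(Homeomorph.setCongr (energyLevel_eq_sphereBundle ε hε.le)).trans <|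
    (Homeomorph.sphereBundleRescale _ _ hspeed_cont hspeed_pos).trans
      (Homeomorph.setCongr unitCotangent_eq_sphereBundle.symm)⟩
end
end

section
/- Existence of the asymptotic direction for short-range scattering: let V : ℝⁿ → ℝ be continuously differentiable and suppose there are constants C > 0 and δ > 0 such that |V(q)| ≤ C(1 + ‖q‖)^{−1−δ} and ‖∇V(q)‖ ≤ C(1 + ‖q‖)^{−2−δ} for all q. Let q : [0, ∞) → ℝⁿ be twice continuously differentiable with q″(t) = −∇V(q(t)) for all t, and suppose there are c > 0 and t₀ ≥ 0 with ‖q(t)‖ ≥ c t for all t ≥ t₀. Then the asymptotic direction p̂⁺ = lim_{t→∞} q′(t) exists, and ‖p̂⁺‖² = 2h, where h = (1/2)‖q′(0)‖² + V(q(0)) is the (conserved) energy of the trajectory. -/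
/-!
Along the trajectory, `‖q t‖ ≥ c t` turns the decay hypotheses into `‖q″ t‖ = O(t^(-2-δ))`,
which is integrable at infinity, so `q′` converges; and `|V (q t)| = O(t^(-1-δ)) → 0`, so
conservation of energy `½‖q′ t‖² + V (q t) = h` gives `‖p̂⁺‖² = 2h` in the limit.
-/

open Filter MeasureTheory Set Real Topology

section

variable {E : Type*} [NormedAddCommGroup E] [InnerProductSpace ℝ E] [CompleteSpace E]

theorem hasDerivAt_kinetic_add_potential {V : E → ℝ} {q p : ℝ → E} {t : ℝ}
    (hV : DifferentiableAt ℝ V (q t)) (hq : HasDerivAt q (p t) t)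
    (hp : HasDerivAt p (-gradient V (q t)) t) :
    HasDerivAt (fun s ↦ 1 / 2 * ‖p s‖ ^ 2 + V (q s)) 0 t := by
  have hVq : HasDerivAt (fun s ↦ V (q s)) (inner ℝ (gradient V (q t)) (p t)) t := by
    rw [inner_gradient_left]
    exact hV.hasFDerivAt.comp_hasDerivAt t hq
  refine ((hp.norm_sq.const_mul (1 / 2)).add hVq).congr_deriv ?_
  rw [inner_neg_right, real_inner_comm]
  ring

theorem kinetic_add_potential_eq_of_newton {V : E → ℝ} {q : ℝ → E}
    (hV : Differentiable ℝ V) (hq : Differentiable ℝ q) (hq' : Differentiable ℝ (deriv q))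
    (hnewton : ∀ t, 0 ≤ t → deriv (deriv q) t = -gradient V (q t)) {t : ℝ} (ht : 0 ≤ t) :
    1 / 2 * ‖deriv q t‖ ^ 2 + V (q t) = 1 / 2 * ‖deriv q 0‖ ^ 2 + V (q 0) := by
  have henergy : Differentiable ℝ (fun s ↦ 1 / 2 * ‖deriv q s‖ ^ 2 + V (q s)) :=
    ((hq'.norm_sq ℝ).const_mul _).add (hV.comp hq)
  refine constant_of_has_deriv_right_zero henergy.continuous.continuousOn
    (fun s hs ↦ ?_) t ⟨ht, le_rfl⟩
  refine (hasDerivAt_kinetic_add_potential (hV _) (hq s).hasDerivAt ?_).hasDerivWithinAt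
  exact hnewton s hs.1 ▸ (hq' s).hasDerivAt

end

theorem exists_tendsto_of_norm_deriv_le_rpow {F : Type*} [NormedAddCommGroup F]
    [NormedSpace ℝ F] [CompleteSpace F] {p : ℝ → F} {T K s : ℝ} (hT : 0 < T) (hs : 1 < s)
    (hp : ∀ t ∈ Ioi T, DifferentiableAt ℝ p t) (hbound : ∀ t ∈ Ioi T, ‖deriv p t‖ ≤ K * t ^ (-s)) :
    ∃ l, Tendsto p atTop (𝓝 l) := by
  have hint : IntegrableOn (deriv p) (Ioi T) :=
    ((integrableOn_Ioi_rpow_of_lt (by linarith) hT).const_mul K).mono'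
      (aestronglyMeasurable_deriv p _) ((ae_restrict_iff' measurableSet_Ioi).2 (ae_of_all _ hbound))
  exact ⟨_, tendsto_limUnder_of_hasDerivAt_of_integrableOn_Ioi
    (fun t ht ↦ (hp t ht).hasDerivAt) hint⟩

theorem tendsto_zero_of_norm_le_rpow {F : Type*} [NormedAddCommGroup F] {f : ℝ → F} {K s : ℝ}
    (hs : 0 < s) (hf : ∀ᶠ t in atTop, ‖f t‖ ≤ K * t ^ (-s)) : Tendsto f atTop (𝓝 0) :=
  squeeze_zero_norm' hf <| by simpa using (tendsto_rpow_neg_atTop hs).const_mul K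

theorem one_add_rpow_neg_le {c t r s : ℝ} (hc : 0 < c) (ht : 0 < t) (hr : c * t ≤ r) (hs : 0 ≤ s) :
    (1 + r) ^ (-s) ≤ c ^ (-s) * t ^ (-s) := by
  rw [← mul_rpow hc.le ht.le]
  exact rpow_le_rpow_of_nonpos (by positivity) (by linarith) (by linarith)

theorem asymptotic_direction_exists_general
    (n : ℕ) (V : EuclideanSpace ℝ (Fin n) → ℝ) (hV : ContDiff ℝ 1 V)
    (C δ : ℝ) (hC : 0 < C) (hδ : 0 < δ)
    (hVdecay : ∀ x : EuclideanSpace ℝ (Fin n), |V x| ≤ C * (1 + ‖x‖) ^ (-(1 + δ)))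
    (hgraddecay : ∀ x : EuclideanSpace ℝ (Fin n),
      ‖gradient V x‖ ≤ C * (1 + ‖x‖) ^ (-(2 + δ)))
    (q : ℝ → EuclideanSpace ℝ (Fin n)) (hq : ContDiff ℝ 2 q)
    (hODE : ∀ t : ℝ, 0 ≤ t → deriv (deriv q) t = -gradient V (q t))
    (c t₀ : ℝ) (hc : 0 < c)
    (hescape : ∀ t : ℝ, t₀ ≤ t → c * t ≤ ‖q t‖) :
    ∃ phat : EuclideanSpace ℝ (Fin n),
      Tendsto (deriv q) atTop (nhds phat) ∧
      ‖phat‖ ^ 2 = 2 * ((1 / 2) * ‖deriv q 0‖ ^ 2 + V (q 0)) := by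
  have hq' : Differentiable ℝ (deriv q) := (hq.deriv' (n := 1)).differentiable one_ne_zero
  set T := max t₀ 1
  have hdecay : ∀ t > T, ∀ s : ℝ, 0 ≤ s → (1 + ‖q t‖) ^ (-s) ≤ c ^ (-s) * t ^ (-s) :=
    fun t ht s hs ↦
      one_add_rpow_neg_le hc (by linarith [le_max_right t₀ 1])
        (hescape t (by linarith [le_max_left t₀ 1])) hs
  obtain ⟨phat, hphat⟩ := exists_tendsto_of_norm_deriv_le_rpow (K := C * c ^ (-(2 + δ)))
    (by positivity : 0 < T) (by linarith : 1 < 2 + δ) (fun t _ ↦ hq' t) fun t (ht : T < t) ↦ by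
      rw [hODE t (by linarith [le_max_right t₀ 1]), norm_neg, mul_assoc]
      exact (hgraddecay _).trans (by gcongr; exact hdecay t ht _ (by linarith))
  have hVq : Tendsto (fun t ↦ V (q t)) atTop (𝓝 0) :=
    tendsto_zero_of_norm_le_rpow (K := C * c ^ (-(1 + δ))) (by linarith : 0 < 1 + δ) <|
      (eventually_gt_atTop T).mono fun t ht ↦ by
        rw [Real.norm_eq_abs, mul_assoc]
        exact (hVdecay _).trans (by gcongr; exact hdecay t ht _ (by linarith))
  have hkinetic : Tendsto (fun t ↦ ‖deriv q t‖ ^ 2) atTop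
      (𝓝 (2 * ((1 / 2) * ‖deriv q 0‖ ^ 2 + V (q 0)))) := by
    have h := (hVq.const_mul 2).const_sub (2 * ((1 / 2) * ‖deriv q 0‖ ^ 2 + V (q 0)))
    rw [mul_zero, sub_zero] at h
    refine h.congr' ?_
    filter_upwards [eventually_ge_atTop 0] with t ht
    linarith [kinetic_add_potential_eq_of_newton (hV.differentiable one_ne_zero)
      (hq.differentiable (by norm_num)) hq' hODE ht]
  exact ⟨phat, hphat, tendsto_nhds_unique (hphat.norm.pow 2) hkinetic⟩

/-- Existence of the asymptotic direction for short-range scattering: for a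
short-range potential V (decay |V(q)| ≤ C(1+‖q‖)^{-1-δ}, ‖∇V(q)‖ ≤ C(1+‖q‖)^{-2-δ})
and a trajectory q″ = −∇V(q) with ‖q(t)‖ ≥ c t eventually, the asymptotic
direction p̂⁺ = lim_{t→∞} q′(t) exists and ‖p̂⁺‖² = 2h, where
h = (1/2)‖q′(0)‖² + V(q(0)). -/
theorem asymptotic_direction_exists
    (n : ℕ) (V : EuclideanSpace ℝ (Fin n) → ℝ) (hV : ContDiff ℝ 1 V)
    (C δ : ℝ) (hC : 0 < C) (hδ : 0 < δ)
    (hVdecay : ∀ x : EuclideanSpace ℝ (Fin n), |V x| ≤ C * (1 + ‖x‖) ^ (-(1 + δ)))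
    (hgraddecay : ∀ x : EuclideanSpace ℝ (Fin n),
      ‖gradient V x‖ ≤ C * (1 + ‖x‖) ^ (-(2 + δ)))
    (q : ℝ → EuclideanSpace ℝ (Fin n)) (hq : ContDiff ℝ 2 q)
    (hODE : ∀ t : ℝ, 0 ≤ t → deriv (deriv q) t = -gradient V (q t))
    (c t₀ : ℝ) (hc : 0 < c) (ht₀ : 0 ≤ t₀)
    (hescape : ∀ t : ℝ, t₀ ≤ t → c * t ≤ ‖q t‖) :
    ∃ phat : EuclideanSpace ℝ (Fin n),
      Tendsto (deriv q) atTop (nhds phat) ∧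
      ‖phat‖ ^ 2 = 2 * ((1 / 2) * ‖deriv q 0‖ ^ 2 + V (q 0)) :=
  asymptotic_direction_exists_general n V hV C δ hC hδ hVdecay hgraddecay q hq hODE c t₀ hc hescape
end

section
/- Existence of the impact parameter for short-range scattering: let V : ℝⁿ → ℝ be continuously differentiable and suppose there are constants C > 0 and δ > 0 such that |V(q)| ≤ C(1 + ‖q‖)^{−1−δ} and ‖∇V(q)‖ ≤ C(1 + ‖q‖)^{−2−δ} for all q. Let q : [0, ∞) → ℝⁿ be twice continuously differentiable with q″(t) = −∇V(q(t)) for all t, suppose there are c > 0 and t₀ ≥ 0 with ‖q(t)‖ ≥ c t for all t ≥ t₀, and suppose the energy h = (1/2)‖q′(0)‖² + V(q(0)) is positive. Then, with p̂⁺ = lim_{t→∞} q′(t), the impact parameter q⊥⁺ = lim_{t→∞} [ q(t) − (⟨q(t), p̂⁺⟩ / (2h)) p̂⁺ ] exists. -/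
/-!
Along the escaping trajectory the acceleration `q̈ = -∇V(q)` is `O(t^(-2-δ))`, so `q̇` converges
to some `p̂` with `‖q̇ t - p̂‖ = O(t^(-1-δ))`, an integrable rate. Conservation of energy together
with `V (q t) → 0` gives `‖p̂‖² = 2h`, so the map `x ↦ x - (⟪x, p̂⟫ / 2h) p̂` is the orthogonal
projection onto `p̂⊥`. It kills `p̂`, so the derivative of the projected trajectory is the
projection of `q̇ - p̂`, which is integrable; hence the projected trajectory converges.
-/

open Filter MeasureTheory Set Topology

theorem integrableOn_Ioi_of_norm_le_rpow {E : Type*} [NormedAddCommGroup E] {g : ℝ → E}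
    {a K r : ℝ} (ha : 0 < a) (hr : r < -1)
    (hg : AEStronglyMeasurable g (volume.restrict (Ioi a)))
    (hbound : ∀ x ∈ Ioi a, ‖g x‖ ≤ K * x ^ r) : IntegrableOn g (Ioi a) :=
  ((integrableOn_Ioi_rpow_of_lt hr ha).const_mul K).mono' hg <|
    (ae_restrict_mem measurableSet_Ioi).mono hbound

theorem exists_tendsto_of_norm_deriv_le_rpow_s15 {E : Type*} [NormedAddCommGroup E]
    [NormedSpace ℝ E] [CompleteSpace E] {f f' : ℝ → E} {a K r : ℝ}
    (ha : 0 < a) (hr : 0 < r) (hderiv : ∀ x ∈ Ici a, HasDerivAt f (f' x) x)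
    (hmeas : AEStronglyMeasurable f' (volume.restrict (Ioi a)))
    (hbound : ∀ x ∈ Ici a, ‖f' x‖ ≤ K * x ^ (-(r + 1))) :
    ∃ L, Tendsto f atTop (𝓝 L) ∧ ∀ t ∈ Ici a, ‖f t - L‖ ≤ K / r * t ^ (-r) := by
  have hint : ∀ t ∈ Ici a, IntegrableOn f' (Ioi t) := fun t ht =>
    integrableOn_Ioi_of_norm_le_rpow (ha.trans_le ht) (by linarith)
      (hmeas.mono_set (Ioi_subset_Ioi ht)) fun x hx => hbound x (Ioi_subset_Ici ht hx)
  have hlim := tendsto_limUnder_of_hasDerivAt_of_integrableOn_Ioi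
    (fun x hx => hderiv x (mem_Ici.2 hx.le)) (hint a self_mem_Ici)
  refine ⟨_, hlim, fun t ht => ?_⟩
  have ht_pos : 0 < t := ha.trans_le ht
  calc ‖f t - limUnder atTop f‖ = ‖∫ x in Ioi t, f' x‖ := by
        rw [integral_Ioi_of_hasDerivAt_of_tendsto'
          (fun x hx => hderiv x (Ici_subset_Ici.2 ht hx)) (hint t ht) hlim, norm_sub_rev]
    _ ≤ ∫ x in Ioi t, K * x ^ (-(r + 1)) :=
        norm_integral_le_of_norm_le
          ((integrableOn_Ioi_rpow_of_lt (by linarith) ht_pos).const_mul K)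
          ((ae_restrict_mem measurableSet_Ioi).mono fun x hx => hbound x (Ioi_subset_Ici ht hx))
    _ = K / r * t ^ (-r) := by
        rw [integral_const_mul, integral_Ioi_rpow_of_lt (by linarith) ht_pos,
          show -(r + 1) + 1 = -r by ring]
        field_simp

theorem norm_sq_eq_of_tendsto_of_energy_eq {E : Type*} [NormedAddCommGroup E] {p : ℝ → E}
    {u : ℝ → ℝ} {v : E} {h : ℝ}
    (hp : Tendsto p atTop (𝓝 v)) (hu : Tendsto u atTop (𝓝 0))
    (hE : ∀ᶠ t in atTop, 1 / 2 * ‖p t‖ ^ 2 + u t = h) : ‖v‖ ^ 2 = 2 * h := by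
  have hlim := (((hp.norm.pow 2).const_mul (1 / 2)).add hu).congr' hE
  have := tendsto_nhds_unique hlim tendsto_const_nhds
  linarith

theorem ContinuousLinearMap.exists_tendsto_comp_of_integrableOn_deriv_sub {E F : Type*}
    [NormedAddCommGroup E] [NormedSpace ℝ E] [NormedAddCommGroup F] [NormedSpace ℝ F]
    [CompleteSpace F] (L : E →L[ℝ] F) {q q' : ℝ → E} {v : E} {a : ℝ} (hLv : L v = 0)
    (hq : ∀ t ∈ Ioi a, HasDerivAt q (q' t) t)
    (hint : IntegrableOn (fun t => q' t - v) (Ioi a)) :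
    ∃ w, Tendsto (fun t => L (q t)) atTop (𝓝 w) := by
  refine ⟨_, tendsto_limUnder_of_hasDerivAt_of_integrableOn_Ioi (fun t ht => ?_)
    (L.integrable_comp hint)⟩
  simpa [hLv, Function.comp_def] using L.hasFDerivAt.comp_hasDerivAt t (hq t ht)

theorem mul_one_add_rpow_neg_le {C c s x e : ℝ} (hC : 0 ≤ C) (he : 0 ≤ e) (hc : 0 < c)
    (hs : 0 < s) (hx : c * s ≤ x) : C * (1 + x) ^ (-e) ≤ C * c ^ (-e) * s ^ (-e) := by
  rw [mul_assoc, ← Real.mul_rpow hc.le hs.le]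
  exact mul_le_mul_of_nonneg_left
    (Real.rpow_le_rpow_of_nonpos (mul_pos hc hs) (by linarith) (by linarith)) hC

theorem energy_eq_of_newton {E : Type*} [NormedAddCommGroup E] [InnerProductSpace ℝ E]
    [CompleteSpace E] {V : E → ℝ} {q : ℝ → E} (hV : Differentiable ℝ V)
    (hq : Differentiable ℝ q) (hq' : Differentiable ℝ (deriv q))
    (hODE : ∀ t, 0 ≤ t → deriv (deriv q) t = -gradient V (q t)) {t : ℝ} (ht : 0 ≤ t) :
    1 / 2 * ‖deriv q t‖ ^ 2 + V (q t) = 1 / 2 * ‖deriv q 0‖ ^ 2 + V (q 0) := by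
  set energy := fun s => 1 / 2 * ‖deriv q s‖ ^ 2 + V (q s)
  have hderiv : ∀ s, 0 ≤ s → HasDerivAt energy 0 s := by
    intro s hs
    have hkin := ((hq' s).hasDerivAt.norm_sq).const_mul (1 / 2)
    have hpot := (hV (q s)).hasFDerivAt.comp_hasDerivAt s (hq s).hasDerivAt
    refine (hkin.add hpot).congr_deriv ?_
    rw [hODE s hs, ← inner_gradient_left, inner_neg_right, real_inner_comm]
    ring
  have hcont : Continuous energy :=
    (continuous_const.mul (hq'.continuous.norm.pow 2)).add (hV.continuous.comp hq.continuous)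
  exact constant_of_has_deriv_right_zero hcont.continuousOn
    (fun x hx => (hderiv x hx.1).hasDerivWithinAt) t ⟨ht, le_rfl⟩

theorem impact_parameter_exists_general
    (n : ℕ) (V : EuclideanSpace ℝ (Fin n) → ℝ) (hV : ContDiff ℝ 1 V)
    (C δ : ℝ) (hC : 0 < C) (hδ : 0 < δ)
    (hVdecay : ∀ x : EuclideanSpace ℝ (Fin n), |V x| ≤ C * (1 + ‖x‖) ^ (-(1 + δ)))
    (hgraddecay : ∀ x : EuclideanSpace ℝ (Fin n),
      ‖gradient V x‖ ≤ C * (1 + ‖x‖) ^ (-(2 + δ)))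
    (q : ℝ → EuclideanSpace ℝ (Fin n)) (hq : ContDiff ℝ 2 q)
    (hODE : ∀ t : ℝ, 0 ≤ t → deriv (deriv q) t = -gradient V (q t))
    (c t₀ : ℝ) (hc : 0 < c)
    (hescape : ∀ t : ℝ, t₀ ≤ t → c * t ≤ ‖q t‖)
    (h : ℝ) (hh : h = (1 / 2) * ‖deriv q 0‖ ^ 2 + V (q 0)) :
    ∃ phat qperp : EuclideanSpace ℝ (Fin n),
      Tendsto (deriv q) atTop (nhds phat) ∧
      Tendsto (fun t : ℝ => q t - ((inner ℝ (q t) phat : ℝ) / (2 * h)) • phat)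
        atTop (nhds qperp) := by
  have hq₁ := hq.differentiable two_ne_zero
  have hp := hq.differentiable_deriv_two
  set T := max t₀ 1
  have hT₀ : 0 < T := one_pos.trans_le (le_max_right _ _)
  have hT : ∀ s ∈ Ici T, t₀ ≤ s ∧ 0 < s := fun s hs =>
    ⟨(le_max_left _ _).trans hs, hT₀.trans_le hs⟩
  have hdecay : ∀ e : ℝ, 0 ≤ e → ∀ s ∈ Ici T,
      C * (1 + ‖q s‖) ^ (-e) ≤ C * c ^ (-e) * s ^ (-e) := fun e he s hs =>
    mul_one_add_rpow_neg_le hC.le he hc (hT s hs).2 (hescape s (hT s hs).1)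
  obtain ⟨phat, hphat, hrate⟩ := exists_tendsto_of_norm_deriv_le_rpow_s15 (f := deriv q)
    (K := C * c ^ (-(2 + δ))) hT₀ (add_pos one_pos hδ)
    (fun x _ => (hp x).hasDerivAt) (measurable_deriv _).aestronglyMeasurable
    fun s hs => by
      rw [hODE s (hT s hs).2.le, norm_neg, show -(1 + δ + 1) = -(2 + δ) by ring]
      exact (hgraddecay _).trans (hdecay _ (by linarith) s hs)
  have hVq : Tendsto (fun t => V (q t)) atTop (𝓝 0) := by
    have hbound := (tendsto_rpow_neg_atTop (add_pos one_pos hδ)).const_mul (C * c ^ (-(1 + δ)))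
    rw [mul_zero] at hbound
    refine squeeze_zero_norm' ?_ hbound
    filter_upwards [eventually_ge_atTop T] with s hs
    exact (hVdecay _).trans (hdecay (1 + δ) (by linarith) s hs)
  have hspeed : ‖phat‖ ^ 2 = 2 * h := norm_sq_eq_of_tendsto_of_energy_eq hphat hVq <| by
    filter_upwards [eventually_ge_atTop 0] with t ht
    rw [hh, energy_eq_of_newton (hV.differentiable one_ne_zero) hq₁ hp hODE ht]
  have hint : IntegrableOn (fun t => deriv q t - phat) (Ioi T) :=
    integrableOn_Ioi_of_norm_le_rpow hT₀ (by linarith)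
      ((measurable_deriv q).sub_const phat).aestronglyMeasurable
      fun s hs => hrate s (mem_Ici.2 hs.le)
  obtain ⟨qperp, hqperp⟩ := ContinuousLinearMap.exists_tendsto_comp_of_integrableOn_deriv_sub
    _ (Submodule.starProjection_orthogonalComplement_singleton_eq_zero phat)
    (fun t _ => (hq₁ t).hasDerivAt) hint
  refine ⟨phat, qperp, hphat, hqperp.congr fun t => ?_⟩
  rw [Submodule.starProjection_orthogonal, sub_apply,
    ContinuousLinearMap.id_apply, Submodule.starProjection_singleton, real_inner_comm, hspeed]
  rfl

/-- Existence of the impact parameter for short-range scattering: under the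
short-range decay assumptions on V, for a trajectory q″ = −∇V(q) with
‖q(t)‖ ≥ c t eventually and positive energy h = (1/2)‖q′(0)‖² + V(q(0)),
the asymptotic direction p̂⁺ = lim_{t→∞} q′(t) exists and the impact parameter
q⊥⁺ = lim_{t→∞} [q(t) − (⟨q(t), p̂⁺⟩/(2h)) p̂⁺] exists. -/
theorem impact_parameter_exists
    (n : ℕ) (V : EuclideanSpace ℝ (Fin n) → ℝ) (hV : ContDiff ℝ 1 V)
    (C δ : ℝ) (hC : 0 < C) (hδ : 0 < δ)
    (hVdecay : ∀ x : EuclideanSpace ℝ (Fin n), |V x| ≤ C * (1 + ‖x‖) ^ (-(1 + δ)))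
    (hgraddecay : ∀ x : EuclideanSpace ℝ (Fin n),
      ‖gradient V x‖ ≤ C * (1 + ‖x‖) ^ (-(2 + δ)))
    (q : ℝ → EuclideanSpace ℝ (Fin n)) (hq : ContDiff ℝ 2 q)
    (hODE : ∀ t : ℝ, 0 ≤ t → deriv (deriv q) t = -gradient V (q t))
    (c t₀ : ℝ) (hc : 0 < c) (ht₀ : 0 ≤ t₀)
    (hescape : ∀ t : ℝ, t₀ ≤ t → c * t ≤ ‖q t‖)
    (h : ℝ) (hh : h = (1 / 2) * ‖deriv q 0‖ ^ 2 + V (q 0)) (hpos : 0 < h) :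
    ∃ phat qperp : EuclideanSpace ℝ (Fin n),
      Tendsto (deriv q) atTop (nhds phat) ∧
      Tendsto (fun t : ℝ => q t - ((inner ℝ (q t) phat : ℝ) / (2 * h)) • phat)
        atTop (nhds qperp) :=
  impact_parameter_exists_general n V hV C δ hC hδ hVdecay hgraddecay q hq hODE c t₀ hc hescape h hh
end
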